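/- Let k ≥ 1, φ ∈ ℝ, and let P = P₁ ⊗ ⋯ ⊗ P_k be a Pauli string. There exist λ ∈ ℂ with λ ≠ 0 and α ∈ ℝ such that P|φ, k⟩ = λ • |φ + α, k⟩ if and only if either every P_j ∈ {I₂, Z} or every P_j ∈ {X, Y}. Moreover, if every P_j ∈ {I₂, Z} then P|φ, k⟩ = |φ + sπ, k⟩ where s is the number of indices j with P_j = Z; and if every P_j ∈ {X, Y} then P|φ, k⟩ = λ • |φ + (mπ − 2φ), k⟩ for some λ ≠ 0, where m is the number of indices j with P_j = Y. -/

import Mathlib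

/-- The four Pauli labels. -/
inductive Pauli | I | X | Y | Z
  deriving DecidableEq

instance instFintypePauli : Fintype Pauli where
  elems := {Pauli.I, Pauli.X, Pauli.Y, Pauli.Z}
  complete := by
    intro x
    cases x <;> simp

/-- The Pauli matrices as 2×2 complex matrices. -/
def Pauli.mat : Pauli → Matrix (Fin 2) (Fin 2) ℂ
  | Pauli.I => 1
  | Pauli.X => !![0, 1; 1, 0]
  | Pauli.Y => !![0, -Complex.I; Complex.I, 0]
  | Pauli.Z => !![1, 0; 0, -1]

/-- The `n`-qubit Pauli operator `P₁ ⊗ ⋯ ⊗ Pₙ`, the Kronecker product realized as a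
matrix indexed by bit strings `Fin n → Fin 2` (a `2ⁿ × 2ⁿ` complex matrix). -/
def pauliOp {n : ℕ} (p : Fin n → Pauli) :
    Matrix (Fin n → Fin 2) (Fin n → Fin 2) ℂ :=
  Matrix.of fun f g => ∏ j, (p j).mat (f j) (g j)

/-- The Z-spider state `|φ, k⟩ = |0⟩^{⊗k} + e^{iφ}|1⟩^{⊗k}`, realized in the function space
`(Fin k → Fin 2) → ℂ`: it takes value `1` on the all-zeros string, `e^{iφ}` on the all-ones
string and `0` elsewhere. -/
noncomputable def zspiderState (k : ℕ) (φ : ℝ) : (Fin k → Fin 2) → ℂ :=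
  fun f => (if ∀ j, f j = 0 then (1 : ℂ) else 0) +
    Complex.exp ((φ : ℂ) * Complex.I) * (if ∀ j, f j = 1 then 1 else 0)

lemma diag_col0 {p : Pauli} (hp : p = Pauli.I ∨ p = Pauli.Z) (a : Fin 2) :
    p.mat a 0 = if a = 0 then 1 else 0 := by
  rcases hp with rfl | rfl <;> fin_cases a <;> simp [Pauli.mat, Matrix.one_apply]

lemma diag_col1 {p : Pauli} (hp : p = Pauli.I ∨ p = Pauli.Z) (a : Fin 2) :
    p.mat a 1 = if a = 1 then (if p = Pauli.Z then -1 else 1) else 0 := by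
  rcases hp with rfl | rfl <;> fin_cases a <;> simp [Pauli.mat, Matrix.one_apply]

lemma off_col0 {p : Pauli} (hp : p = Pauli.X ∨ p = Pauli.Y) (a : Fin 2) :
    p.mat a 0 = if a = 1 then (if p = Pauli.Y then Complex.I else 1) else 0 := by
  rcases hp with rfl | rfl <;> fin_cases a <;> simp [Pauli.mat]

lemma off_col1 {p : Pauli} (hp : p = Pauli.X ∨ p = Pauli.Y) (a : Fin 2) :
    p.mat a 1 = if a = 0 then (if p = Pauli.Y then -Complex.I else 1) else 0 := by
  rcases hp with rfl | rfl <;> fin_cases a <;> simp [Pauli.mat]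

lemma mulVec_eval {k : ℕ} (P : Fin k → Pauli) (φ : ℝ) (f : Fin k → Fin 2) :
    (pauliOp P).mulVec (zspiderState k φ) f =
      pauliOp P f (fun _ => 0) +
        Complex.exp ((φ:ℂ) * Complex.I) * pauliOp P f (fun _ => 1) := by
  have h0 : ∀ g : Fin k → Fin 2, (∀ j, g j = 0) ↔ g = (fun _ => 0) := fun g => by
    simp [funext_iff]
  have h1 : ∀ g : Fin k → Fin 2, (∀ j, g j = 1) ↔ g = (fun _ => 1) := fun g => by
    simp [funext_iff]
  simp only [Matrix.mulVec, dotProduct, zspiderState, mul_add]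
  rw [Finset.sum_add_distrib]
  congr 1
  · simp_rw [h0, mul_ite, mul_one, mul_zero]
    rw [Finset.sum_ite_eq' Finset.univ (fun _ => 0 : Fin k → Fin 2)]
    simp
  · simp_rw [h1, mul_ite, mul_one, mul_zero]
    rw [Finset.sum_ite_eq' Finset.univ (fun _ => 1 : Fin k → Fin 2)]
    simp [mul_comm]

lemma diag_op0 {k : ℕ} {P : Fin k → Pauli} (hP : ∀ j, P j = Pauli.I ∨ P j = Pauli.Z)
    (f : Fin k → Fin 2) :
    pauliOp P f (fun _ => 0) = if ∀ j, f j = 0 then 1 else 0 := by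
  show (∏ j, (P j).mat (f j) 0) = _
  rw [Finset.prod_congr rfl (fun j _ => diag_col0 (hP j) (f j)), Finset.prod_boole]
  simp

lemma diag_op1 {k : ℕ} {P : Fin k → Pauli} (hP : ∀ j, P j = Pauli.I ∨ P j = Pauli.Z)
    (f : Fin k → Fin 2) :
    pauliOp P f (fun _ => 1) =
      if ∀ j, f j = 1 then
        (-1 : ℂ) ^ (Finset.univ.filter fun j => P j = Pauli.Z).card else 0 := by
  show (∏ j, (P j).mat (f j) 1) = _
  rw [Finset.prod_congr rfl (fun j _ => diag_col1 (hP j) (f j))]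
  have : ∀ j : Fin k, (if f j = 1 then (if P j = Pauli.Z then (-1:ℂ) else 1) else 0)
      = (if P j = Pauli.Z then (-1:ℂ) else 1) * (if f j = 1 then 1 else 0) := by
    intro j; by_cases h : f j = 1 <;> simp [h]
  rw [Finset.prod_congr rfl (fun j _ => this j), Finset.prod_mul_distrib,
    Finset.prod_boole, Finset.prod_ite, Finset.prod_const, Finset.prod_const]
  simp [mul_comm]

lemma off_op0 {k : ℕ} {P : Fin k → Pauli} (hP : ∀ j, P j = Pauli.X ∨ P j = Pauli.Y)
    (f : Fin k → Fin 2) :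
    pauliOp P f (fun _ => 0) =
      if ∀ j, f j = 1 then
        Complex.I ^ (Finset.univ.filter fun j => P j = Pauli.Y).card else 0 := by
  show (∏ j, (P j).mat (f j) 0) = _
  rw [Finset.prod_congr rfl (fun j _ => off_col0 (hP j) (f j))]
  have : ∀ j : Fin k, (if f j = 1 then (if P j = Pauli.Y then Complex.I else 1) else 0)
      = (if P j = Pauli.Y then Complex.I else 1) * (if f j = 1 then 1 else 0) := by
    intro j; by_cases h : f j = 1 <;> simp [h]
  rw [Finset.prod_congr rfl (fun j _ => this j), Finset.prod_mul_distrib,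
    Finset.prod_boole, Finset.prod_ite, Finset.prod_const, Finset.prod_const]
  simp [mul_comm]

lemma off_op1 {k : ℕ} {P : Fin k → Pauli} (hP : ∀ j, P j = Pauli.X ∨ P j = Pauli.Y)
    (f : Fin k → Fin 2) :
    pauliOp P f (fun _ => 1) =
      if ∀ j, f j = 0 then
        (-Complex.I) ^ (Finset.univ.filter fun j => P j = Pauli.Y).card else 0 := by
  show (∏ j, (P j).mat (f j) 1) = _
  rw [Finset.prod_congr rfl (fun j _ => off_col1 (hP j) (f j))]
  have : ∀ j : Fin k, (if f j = 0 then (if P j = Pauli.Y then -Complex.I else 1) else 0)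
      = (if P j = Pauli.Y then -Complex.I else 1) * (if f j = 0 then 1 else 0) := by
    intro j; by_cases h : f j = 0 <;> simp [h]
  rw [Finset.prod_congr rfl (fun j _ => this j), Finset.prod_mul_distrib,
    Finset.prod_boole, Finset.prod_ite, Finset.prod_const, Finset.prod_const]
  simp [mul_comm]

lemma exp_shift (φ : ℝ) (n : ℕ) :
    Complex.exp (((φ + n * Real.pi : ℝ) : ℂ) * Complex.I) =
      Complex.exp ((φ:ℂ) * Complex.I) * (-1 : ℂ) ^ n := by
  push_cast
  rw [add_mul, Complex.exp_add]
  congr 1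
  rw [mul_assoc, Complex.exp_nat_mul, Complex.exp_pi_mul_I]

lemma exp_shift' (φ : ℝ) (m : ℕ) :
    Complex.exp (((φ + (m * Real.pi - 2 * φ) : ℝ) : ℂ) * Complex.I) =
      (-1 : ℂ) ^ m * (Complex.exp ((φ:ℂ) * Complex.I))⁻¹ := by
  have : ((φ + (m * Real.pi - 2 * φ) : ℝ) : ℂ) * Complex.I
      = (m:ℂ) * (Real.pi * Complex.I) + (-((φ:ℂ) * Complex.I)) := by push_cast; ring
  rw [this, Complex.exp_add, Complex.exp_nat_mul, Complex.exp_pi_mul_I, Complex.exp_neg]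

lemma part2 (k : ℕ) (φ : ℝ) (P : Fin k → Pauli)
    (hP : ∀ j, P j = Pauli.I ∨ P j = Pauli.Z) :
      (pauliOp P).mulVec (zspiderState k φ) =
        zspiderState k (φ +
          ((Finset.univ.filter fun j => P j = Pauli.Z).card : ℝ) * Real.pi) := by
  funext f
  rw [mulVec_eval, diag_op0 hP, diag_op1 hP]
  simp only [zspiderState, exp_shift]
  by_cases hf : ∀ j, f j = 1 <;> simp [hf] <;> ring

lemma part3 (k : ℕ) (hk : 1 ≤ k) (φ : ℝ) (P : Fin k → Pauli)
    (hP : ∀ j, P j = Pauli.X ∨ P j = Pauli.Y) :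
      ∃ lam : ℂ, lam ≠ 0 ∧
        (pauliOp P).mulVec (zspiderState k φ) =
          lam • zspiderState k (φ +
            (((Finset.univ.filter fun j => P j = Pauli.Y).card : ℝ) * Real.pi - 2 * φ)) := by
  set m := (Finset.univ.filter fun j => P j = Pauli.Y).card with hm
  refine ⟨(-Complex.I) ^ m * Complex.exp ((φ:ℂ) * Complex.I), ?_, ?_⟩
  · exact mul_ne_zero (pow_ne_zero _ (neg_ne_zero.mpr Complex.I_ne_zero)) (Complex.exp_ne_zero _)
  funext f
  rw [Pi.smul_apply, mulVec_eval, off_op0 hP, off_op1 hP]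
  simp only [zspiderState, exp_shift', smul_eq_mul, ← hm]
  by_cases h1 : ∀ j, f j = 1 <;> by_cases h0 : ∀ j, f j = 0
  · exact absurd ((h0 ⟨0, hk⟩).symm.trans (h1 ⟨0, hk⟩)) (by decide)
  · rw [if_pos h1, if_neg h0, if_pos h1, if_neg h0]
    rw [mul_zero, add_zero, zero_add, mul_one, mul_mul_mul_comm, ← mul_pow,
      mul_inv_cancel₀ (Complex.exp_ne_zero _)]
    simp
  · rw [if_neg h1, if_pos h0, if_neg h1, if_pos h0]
    ring
  · rw [if_neg h1, if_neg h0, if_neg h1, if_neg h0]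
    ring

lemma part1 (k : ℕ) (φ : ℝ) (P : Fin k → Pauli)
    (lam : ℂ) (α : ℝ)
    (heq : (pauliOp P).mulVec (zspiderState k φ) = lam • zspiderState k (φ + α))
    (hA : ¬ ∀ j, P j = Pauli.I ∨ P j = Pauli.Z)
    (hB : ¬ ∀ j, P j = Pauli.X ∨ P j = Pauli.Y) : False := by
  obtain ⟨j₁, hj₁⟩ := not_forall.mp hA
  obtain ⟨j₂, hj₂⟩ := not_forall.mp hB
  set f₀ : Fin k → Fin 2 := fun j => if P j = Pauli.I ∨ P j = Pauli.Z then 0 else 1 with hf₀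
  have hf1 : f₀ j₁ = 1 := by simp [hf₀, hj₁]
  have hf2 : f₀ j₂ = 0 := by
    have : P j₂ = Pauli.I ∨ P j₂ = Pauli.Z := by
      cases h : P j₂ <;> simp_all
    simp [hf₀, this]
  have hn1 : ¬ ∀ j, f₀ j = 0 := fun h => by simp [h j₁] at hf1
  have hn2 : ¬ ∀ j, f₀ j = 1 := fun h => by simp [h j₂] at hf2
  have hval := congrFun heq f₀
  rw [mulVec_eval] at hval
  have hz : pauliOp P f₀ (fun _ => 1) = 0 := by
    apply Finset.prod_eq_zero (Finset.mem_univ j₂)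
    have : P j₂ = Pauli.I ∨ P j₂ = Pauli.Z := by
      cases h : P j₂ <;> simp_all
    rw [diag_col1 this, hf2]
    simp
  have hnz : pauliOp P f₀ (fun _ => 0) ≠ 0 := by
    rw [show pauliOp P f₀ (fun _ => 0) = ∏ j, (P j).mat (f₀ j) 0 from rfl]
    rw [Finset.prod_ne_zero_iff]
    intro j _
    by_cases h : P j = Pauli.I ∨ P j = Pauli.Z
    · rw [diag_col0 h]
      simp [hf₀, h]
    · rw [off_col0 (by cases hj : P j <;> simp_all)]
      simp only [hf₀, h, if_false, if_pos]
      split <;> simp [Complex.I_ne_zero]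
  rw [hz, mul_zero, add_zero, Pi.smul_apply] at hval
  apply hnz
  rw [hval]
  simp [zspiderState, hn1, hn2]

/-- A Pauli string sends `|φ, k⟩` to a nonzero multiple of a twisted state
`|φ + α, k⟩` iff all labels are in `{I, Z}` or all are in `{X, Y}`.  Moreover, if all labels
are in `{I, Z}` then `P|φ, k⟩ = |φ + sπ, k⟩` with `s` the number of `Z`s, and if all labels
are in `{X, Y}` then `P|φ, k⟩ = λ • |φ + (mπ − 2φ), k⟩` for some `λ ≠ 0`, with `m` the
number of `Y`s. -/
theorem zspider_semiweb_characterisation (k : ℕ) (hk : 1 ≤ k) (φ : ℝ) (P : Fin k → Pauli) :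
    ((∃ lam : ℂ, lam ≠ 0 ∧ ∃ α : ℝ,
        (pauliOp P).mulVec (zspiderState k φ) = lam • zspiderState k (φ + α)) ↔
      ((∀ j, P j = Pauli.I ∨ P j = Pauli.Z) ∨ (∀ j, P j = Pauli.X ∨ P j = Pauli.Y))) ∧
    ((∀ j, P j = Pauli.I ∨ P j = Pauli.Z) →
      (pauliOp P).mulVec (zspiderState k φ) =
        zspiderState k (φ +
          ((Finset.univ.filter fun j => P j = Pauli.Z).card : ℝ) * Real.pi)) ∧
    ((∀ j, P j = Pauli.X ∨ P j = Pauli.Y) →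
      ∃ lam : ℂ, lam ≠ 0 ∧
        (pauliOp P).mulVec (zspiderState k φ) =
          lam • zspiderState k (φ +
            (((Finset.univ.filter fun j => P j = Pauli.Y).card : ℝ) * Real.pi - 2 * φ))) := by

  refine ⟨⟨?_, ?_⟩, fun h => part2 k φ P h, fun h => part3 k hk φ P h⟩
  · rintro ⟨lam, hlam, α, heq⟩
    by_contra hc
    rw [not_or] at hc
    exact part1 k φ P lam α heq hc.1 hc.2
  · rintro (h | h)
    · exact ⟨1, one_ne_zero,
        ((Finset.univ.filter fun j => P j = Pauli.Z).card : ℝ) * Real.pi,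
        by rw [one_smul]; exact part2 k φ P h⟩
    · obtain ⟨lam, hlam, heq⟩ := part3 k hk φ P h
      exact ⟨lam, hlam, _, heq⟩
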